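/- Let N₊ = N₋ = 1. Then the ℂ-vector space ker d / im d is four-dimensional, with basis given by the cohomology classes of 1, ψ₁, χ₁ and ψ₁χ₁. -/

import Mathlib

/-!
D = 2, signature (1,1) supersymmetry algebra cohomology.
`R2 Np Nm = ℂ[ψ₁,…,ψ_{N₊}, χ₁,…,χ_{N₋}]`, `Om2` is the free module with basis
`{1, c̃₁, c̃₂, c̃₁c̃₂}`, and `d2` is the differential with `dc̃₁ = P`, `dc̃₂ = Q`.
-/

open MvPolynomial

noncomputable section

/-- The polynomial ring `ℂ[ψ₁,…,ψ_{N₊}, χ₁,…,χ_{N₋}]`; `Sum.inl i ↦ ψᵢ`, `Sum.inr i ↦ χᵢ`. -/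
abbrev R2 (Np Nm : ℕ) : Type := MvPolynomial (Fin Np ⊕ Fin Nm) ℂ

/-- `Ω`: free `R2`-module with basis `{1, c̃₁, c̃₂, c̃₁c̃₂}` (components 0,1,2,3). -/
abbrev Om2 (Np Nm : ℕ) : Type := Fin 4 → R2 Np Nm

/-- The ghost `ψᵢ`. -/
def ψ {Np Nm : ℕ} (i : Fin Np) : R2 Np Nm := X (Sum.inl i)

/-- The ghost `χᵢ`. -/
def χ {Np Nm : ℕ} (i : Fin Nm) : R2 Np Nm := X (Sum.inr i)

/-- `P = Σ ψᵢ²`. -/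
def Pp (Np Nm : ℕ) : R2 Np Nm := ∑ i, ψ i ^ 2

/-- `Q = Σ χᵢ²`. -/
def Qq (Np Nm : ℕ) : R2 Np Nm := ∑ i, χ i ^ 2

/-- The differential `d(ω₀ + c̃₁ω₁ + c̃₂ω₂ + c̃₁c̃₂ω₃) = Pω₁ + Qω₂ + (Pc̃₂ − Qc̃₁)ω₃`,
as a `ℂ`-linear map. -/
def d2L (Np Nm : ℕ) : Om2 Np Nm →ₗ[ℂ] Om2 Np Nm where
  toFun ω := ![Pp Np Nm * ω 1 + Qq Np Nm * ω 2, -(Qq Np Nm * ω 3), Pp Np Nm * ω 3, 0]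
  map_add' a b := by
    funext k
    fin_cases k <;>
      simp [Pi.add_apply, Matrix.cons_val_zero, Matrix.cons_val_one, Matrix.head_cons,
        mul_add] <;> ring
  map_smul' c a := by
    funext k
    fin_cases k <;>
      simp [Pi.smul_apply, Matrix.cons_val_zero, Matrix.cons_val_one, Matrix.head_cons,
        mul_smul_comm, smul_add]

/-- Embedding of `R` into `Ω` (coefficient of the basis element `1`). -/
def ofR {Np Nm : ℕ} (r : R2 Np Nm) : Om2 Np Nm := ![r, 0, 0, 0]

lemma d2L_ofR {Np Nm : ℕ} (r : R2 Np Nm) : d2L Np Nm (ofR r) = 0 := by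
  funext k
  fin_cases k <;>
    simp [d2L, ofR, Matrix.cons_val_zero, Matrix.cons_val_one, Matrix.head_cons]

/-- The image of `d`, as a submodule of the kernel of `d` (`d∘d = 0`). -/
def Bsub (Np Nm : ℕ) : Submodule ℂ (LinearMap.ker (d2L Np Nm)) :=
  Submodule.comap (LinearMap.ker (d2L Np Nm)).subtype (LinearMap.range (d2L Np Nm))

/-- The cohomology `ker d / im d` as a `ℂ`-vector space. -/
def Hco (Np Nm : ℕ) : Type := LinearMap.ker (d2L Np Nm) ⧸ Bsub Np Nm

noncomputable instance (Np Nm : ℕ) : AddCommGroup (Hco Np Nm) :=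
  Submodule.Quotient.addCommGroup _

instance (Np Nm : ℕ) : Module ℂ (Hco Np Nm) := Submodule.Quotient.module _

/-- The cohomology class of a cocycle. -/
def cls {Np Nm : ℕ} (x : Om2 Np Nm) (hx : d2L Np Nm x = 0) : Hco Np Nm :=
  Submodule.Quotient.mk ⟨x, LinearMap.mem_ker.mpr hx⟩

/-!
A cocycle `ω₀ + c̃₁ω₁ + c̃₂ω₂ + c̃₁c̃₂ω₃` has `ω₃ = 0` and `Pω₁ + Qω₂ = 0`. As `P = ψ₁²` and
`Q = χ₁²` are relatively prime, `(ω₁, ω₂) = (Qt, -Pt)`, which is the `c̃`-part of `d(-t c̃₁c̃₂)`.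
So a cocycle is a coboundary iff `ω₀ ∈ (P, Q)`, and the cohomology is
`ℂ[ψ₁, χ₁] / (ψ₁², χ₁²)`, whose monomial basis is `1, ψ₁, χ₁, ψ₁χ₁`.
-/

namespace MvPolynomial

theorem isRelPrime_X_pow_X_pow {K σ : Type*} [Field K] {i j : σ} (hij : i ≠ j) (m n : ℕ) :
    IsRelPrime (X i ^ m : MvPolynomial σ K) (X j ^ n) :=
  (((X_prime (i := i)).irreducible.isRelPrime_iff_not_dvd).2
    (by rwa [X_dvd_X])).pow_left.pow_right

end MvPolynomial

theorem IsRelPrime.exists_eq_mul_of_mul_add_mul_eq_zero {R : Type*} [CommRing R] [IsDomain R]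
    [DecompositionMonoid R] {a b u v : R} (hab : IsRelPrime a b) (hb : b ≠ 0)
    (h : a * u + b * v = 0) : ∃ t, u = b * t ∧ v = -(a * t) := by
  obtain ⟨t, rfl⟩ : b ∣ u :=
    hab.symm.dvd_of_dvd_mul_left ⟨-v, by linear_combination h⟩
  refine ⟨t, rfl, ?_⟩
  have : b * (v + a * t) = 0 := by linear_combination h
  linear_combination (mul_eq_zero.1 this).resolve_left hb

section Cohomology

variable {Np Nm : ℕ}

theorem d2L_apply (ω : Om2 Np Nm) :
    d2L Np Nm ω = ![Pp Np Nm * ω 1 + Qq Np Nm * ω 2, -(Qq Np Nm * ω 3), Pp Np Nm * ω 3, 0] :=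
  rfl

theorem mem_range_d2L_iff (hPQ : IsRelPrime (Pp Np Nm) (Qq Np Nm)) (hP : Pp Np Nm ≠ 0)
    (hQ : Qq Np Nm ≠ 0) {ω : Om2 Np Nm} (hω : d2L Np Nm ω = 0) :
    ω ∈ LinearMap.range (d2L Np Nm) ↔ ω 0 ∈ Ideal.span {Pp Np Nm, Qq Np Nm} := by
  constructor
  · rintro ⟨η, rfl⟩
    exact Ideal.mem_span_pair.2 ⟨η 1, η 2, by simp [d2L_apply, mul_comm]⟩
  · intro h
    obtain ⟨a, b, hab⟩ := Ideal.mem_span_pair.1 h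
    have h0 := congr_fun hω 0
    have h3 := congr_fun hω 2
    simp only [d2L_apply, Matrix.cons_val, Pi.zero_apply, mul_eq_zero, hP, false_or] at h0 h3
    obtain ⟨t, h1, h2⟩ := hPQ.exists_eq_mul_of_mul_add_mul_eq_zero hQ h0
    refine ⟨![0, a, b, -t], ?_⟩
    funext k
    fin_cases k <;> simp [d2L_apply, h1, h2, h3, ← hab, mul_comm]

end Cohomology

section OneOne

open Finsupp

theorem Pp_one_one : Pp 1 1 = X (Sum.inl 0) ^ 2 := by simp [Pp, ψ]

theorem Qq_one_one : Qq 1 1 = X (Sum.inr 0) ^ 2 := by simp [Qq, χ]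

-- `k = a + 2b` indexes the exponent `(a, b)` of `ψ₁ᵃ χ₁ᵇ`, so that `0, 1, 2, 3 ↦ 1, ψ₁, χ₁, ψ₁χ₁`.
def smallMonomial (k : Fin 4) : Fin 1 ⊕ Fin 1 →₀ ℕ :=
  single (Sum.inl 0) ((k : ℕ) % 2) + single (Sum.inr 0) ((k : ℕ) / 2)

theorem smallMonomial_apply_inl (k : Fin 4) : smallMonomial k (Sum.inl 0) = k % 2 := by
  simp [smallMonomial]

theorem smallMonomial_apply_inr (k : Fin 4) : smallMonomial k (Sum.inr 0) = k / 2 := by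
  simp [smallMonomial]

theorem smallMonomial_injective : Function.Injective smallMonomial := by
  intro k l h
  have hl := DFunLike.congr_fun h (Sum.inl 0)
  have hr := DFunLike.congr_fun h (Sum.inr 0)
  rw [smallMonomial_apply_inl, smallMonomial_apply_inl] at hl
  rw [smallMonomial_apply_inr, smallMonomial_apply_inr] at hr
  omega

theorem exists_smallMonomial_eq {m : Fin 1 ⊕ Fin 1 →₀ ℕ} (hl : m (Sum.inl 0) < 2)
    (hr : m (Sum.inr 0) < 2) : ∃ k, smallMonomial k = m := by
  refine ⟨⟨m (Sum.inl 0) + 2 * m (Sum.inr 0), by omega⟩, ?_⟩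
  ext (i | i) <;> obtain rfl := Subsingleton.elim i 0
  · rw [smallMonomial_apply_inl, Fin.val_mk]; omega
  · rw [smallMonomial_apply_inr, Fin.val_mk]; omega

def smallCoeffs : R2 1 1 →ₗ[ℂ] Fin 4 → ℂ :=
  LinearMap.pi fun k => lcoeff ℂ (smallMonomial k)

theorem mem_span_X_sq_iff (r : R2 1 1) :
    r ∈ Ideal.span {X (Sum.inl 0) ^ 2, X (Sum.inr 0) ^ 2} ↔ smallCoeffs r = 0 := by
  have hspan : ({X (Sum.inl 0) ^ 2, X (Sum.inr 0) ^ 2} : Set (R2 1 1)) =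
      (fun s => monomial s 1) '' {single (Sum.inl 0) 2, single (Sum.inr 0) 2} := by
    simp [Set.image_pair, X_pow_eq_monomial]
  rw [hspan, mem_ideal_span_monomial_image, funext_iff]
  simp only [Set.mem_insert_iff, Set.mem_singleton_iff, exists_eq_or_imp, exists_eq_left,
    single_le_iff, MvPolynomial.mem_support_iff, smallCoeffs, LinearMap.pi_apply,
    lcoeff_apply, Pi.zero_apply]
  constructor
  · intro h k
    by_contra hk
    have := h _ hk
    rw [smallMonomial_apply_inl, smallMonomial_apply_inr] at this
    omega
  · intro h m hm
    by_contra! hsmall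
    obtain ⟨k, rfl⟩ := exists_smallMonomial_eq hsmall.1 hsmall.2
    exact hm (h k)

def ghostMonomial : Fin 4 → R2 1 1 := ![1, ψ 0, χ 0, ψ 0 * χ 0]

theorem ghostMonomial_eq (k : Fin 4) : ghostMonomial k = monomial (smallMonomial k) 1 := by
  fin_cases k <;> simp [ghostMonomial, smallMonomial, ψ, χ, X, monomial_mul]

theorem smallCoeffs_ghostMonomial (k : Fin 4) : smallCoeffs (ghostMonomial k) = Pi.single k 1 := by
  funext l
  simp [smallCoeffs, ghostMonomial_eq, coeff_monomial, smallMonomial_injective.eq_iff,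
    Pi.single_apply, eq_comm]

end OneOne

def cohomologyCoeffs : LinearMap.ker (d2L 1 1) →ₗ[ℂ] Fin 4 → ℂ :=
  smallCoeffs ∘ₗ LinearMap.proj 0 ∘ₗ (LinearMap.ker (d2L 1 1)).subtype

theorem ker_cohomologyCoeffs : LinearMap.ker cohomologyCoeffs = Bsub 1 1 := by
  have hP : Pp 1 1 ≠ 0 := by simp [Pp_one_one]
  have hQ : Qq 1 1 ≠ 0 := by simp [Qq_one_one]
  have hPQ : IsRelPrime (Pp 1 1) (Qq 1 1) := by
    rw [Pp_one_one, Qq_one_one]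
    exact isRelPrime_X_pow_X_pow Sum.inl_ne_inr 2 2
  ext ω
  rw [LinearMap.mem_ker, Bsub, Submodule.mem_comap, Submodule.subtype_apply,
    mem_range_d2L_iff hPQ hP hQ ω.2, Pp_one_one, Qq_one_one, mem_span_X_sq_iff]
  rfl

theorem cohomologyCoeffs_ghostMonomial (k : Fin 4) :
    cohomologyCoeffs ⟨ofR (ghostMonomial k), d2L_ofR _⟩ = Pi.single k 1 :=
  smallCoeffs_ghostMonomial k

theorem cohomologyCoeffs_surjective : Function.Surjective cohomologyCoeffs := by
  rw [← LinearMap.range_eq_top, eq_top_iff, ← (Pi.basisFun ℂ (Fin 4)).span_eq,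
    Submodule.span_le]
  rintro _ ⟨k, rfl⟩
  exact ⟨_, by simpa using cohomologyCoeffs_ghostMonomial k⟩

def cohomologyEquiv : Hco 1 1 ≃ₗ[ℂ] Fin 4 → ℂ :=
  (Submodule.quotEquivOfEq _ _ ker_cohomologyCoeffs.symm).trans
    (cohomologyCoeffs.quotKerEquivOfSurjective cohomologyCoeffs_surjective)

theorem cohomologyEquiv_cls_ghostMonomial (k : Fin 4) :
    cohomologyEquiv (cls (ofR (ghostMonomial k)) (d2L_ofR _)) = Pi.single k 1 :=
  cohomologyCoeffs_ghostMonomial k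

/-- for `N₊ = N₋ = 1`, the cohomology `ker d / im d` is a
four-dimensional `ℂ`-vector space with basis given by the classes of
`1`, `ψ₁`, `χ₁` and `ψ₁χ₁`. -/
theorem stmt13 :
    Module.finrank ℂ (Hco 1 1) = 4 ∧
    ∃ B : Module.Basis (Fin 4) ℂ (Hco 1 1),
      B 0 = cls (ofR 1) (d2L_ofR 1) ∧
      B 1 = cls (ofR (ψ 0)) (d2L_ofR (ψ 0)) ∧
      B 2 = cls (ofR (χ 0)) (d2L_ofR (χ 0)) ∧
      B 3 = cls (ofR (ψ 0 * χ 0)) (d2L_ofR (ψ 0 * χ 0)) := by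
  let B := (Pi.basisFun ℂ (Fin 4)).map cohomologyEquiv.symm
  have hB (k : Fin 4) : B k = cls (ofR (ghostMonomial k)) (d2L_ofR _) := by
    rw [Module.Basis.map_apply, Pi.basisFun_apply, LinearEquiv.symm_apply_eq,
      cohomologyEquiv_cls_ghostMonomial]
  exact ⟨by simpa using Module.finrank_eq_card_basis B, B, hB 0, hB 1, hB 2, hB 3⟩
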